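/- Let (Ω, μ) be a probability space, d ≥ 2, K ≥ 1, N ≥ 1, σ ∈ ℝ, and set η = √( K·log d / ((σ² + 1)·N) ). For each n ∈ {1,…,N}, let C_n : Ω → Fin K be a measurable history label and let L̂_n : Ω → (Fin d → ℝ) be a measurable random loss vector with L̂_n(ω)(a) ≥ 0 for all ω and a and each component square-integrable. Define X_n(ω)(a) = exp( −η·∑_{j < n, C_j(ω) = C_n(ω)} L̂_j(ω)(a) ) / ∑_b exp( −η·∑_{j < n, C_j(ω) = C_n(ω)} L̂_j(ω)(b) ), i.e., exponential weights run separately on each label class, pointwise in ω. Assume for each n: L̂_n is independent of X_n and E[L̂_n(a)²] ≤ σ² + 1 for every a. Then for every measurable comparator assignment Z : Ω → (Fin K → Fin d): E[ ∑_{n=1}^N ⟨L̂_n, X_n⟩ − ∑_{n=1}^N L̂_n( Z(C_n) ) ] ≤ 2·√( (σ² + 1)·N·K·log d ). (Paper's Theorem 2: universal regret bound of the OMD-OME algorithm against per-history optimal comparators, where K is the size of the history space.) -/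

import Mathlib

/-
Run separately on each label class, exponential weights is ordinary Hedge on the subsequence of
rounds carrying that label. For Hedge the log-partition function `log ∑ₐ exp (-η Sₐ)` of the
cumulative losses `S` starts at `log d`, drops in each round by at least
`η ⟨ℓ, x⟩ - η² ⟨ℓ², x⟩` (from `exp (-y) ≤ 1 - y + y²` for `y ≥ 0` and `log y ≤ y - 1`), and
ends above `-η S_z` for every comparator `z`. Hence, pathwise, the regret of one class is at most
`log d / η + η ∑ ⟨ℓₙ², xₙ⟩`, and summing over the `K` classes gives `K log d / η + η ∑ ⟨ℓₙ², xₙ⟩`.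
In expectation, independence of `ℓₙ` and `xₙ` gives `E ⟨ℓₙ², xₙ⟩ = ∑ₐ E[ℓₙ(a)²] E[xₙ(a)] ≤ σ² + 1`,
and the chosen `η` balances `K log d / η + η (σ² + 1) N` to `2 √((σ² + 1) N K log d)`.
-/

open MeasureTheory ProbabilityTheory Finset

noncomputable def expWeights {α : Type*} [Fintype α] (η : ℝ) (S : α → ℝ) (a : α) : ℝ :=
  Real.exp (-η * S a) / ∑ b, Real.exp (-η * S b)

def sameLabelCumLoss {ι κ α : Type*} [Fintype ι] [LinearOrder ι] [DecidableEq κ]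
    (ℓ : ι → α → ℝ) (c : ι → κ) (n : ι) (a : α) : ℝ :=
  ∑ j with j < n ∧ c j = c n, ℓ j a

noncomputable def sameLabelExpWeights {ι κ α : Type*} [Fintype ι] [LinearOrder ι] [DecidableEq κ]
    [Fintype α] (η : ℝ) (ℓ : ι → α → ℝ) (c : ι → κ) (n : ι) : α → ℝ :=
  expWeights η (sameLabelCumLoss ℓ c n)

section ExpWeights

variable {α : Type*} [Fintype α] [Nonempty α]

lemma sum_exp_neg_mul_pos (η : ℝ) (S : α → ℝ) : 0 < ∑ b, Real.exp (-η * S b) :=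
  sum_pos (fun _ _ => Real.exp_pos _) univ_nonempty

lemma expWeights_mem_stdSimplex (η : ℝ) (S : α → ℝ) : expWeights η S ∈ stdSimplex ℝ α := by
  refine ⟨fun a => div_nonneg (Real.exp_pos _).le (sum_exp_neg_mul_pos η S).le, ?_⟩
  simp only [expWeights]
  rw [← sum_div, div_self (sum_exp_neg_mul_pos η S).ne']

lemma continuous_expWeights (η : ℝ) : Continuous (expWeights (α := α) η) :=
  continuous_pi fun a => by
    unfold expWeights
    exact Continuous.div (by fun_prop) (by fun_prop) fun S => (sum_exp_neg_mul_pos η S).ne'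

lemma log_sum_exp_add (η : ℝ) (S ℓ : α → ℝ) :
    Real.log (∑ a, Real.exp (-η * (S a + ℓ a))) =
      Real.log (∑ a, Real.exp (-η * S a)) +
        Real.log (∑ a, expWeights η S a * Real.exp (-η * ℓ a)) := by
  have hZ := sum_exp_neg_mul_pos η S
  have hsplit : ∑ a, Real.exp (-η * (S a + ℓ a)) =
      (∑ a, Real.exp (-η * S a)) * ∑ a, expWeights η S a * Real.exp (-η * ℓ a) := by
    rw [mul_sum]
    refine sum_congr rfl fun a _ => ?_
    rw [expWeights, mul_add, Real.exp_add]
    field_simp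
  have havg : 0 < ∑ a, expWeights η S a * Real.exp (-η * ℓ a) := by
    refine pos_of_mul_pos_right (hsplit ▸ ?_) hZ.le
    exact sum_pos (fun a _ => Real.exp_pos _) univ_nonempty
  rw [hsplit, Real.log_mul hZ.ne' havg.ne']

end ExpWeights

lemma Real.exp_neg_le_one_sub_add_sq {x : ℝ} (hx : 0 ≤ x) : Real.exp (-x) ≤ 1 - x + x ^ 2 := by
  have h : Real.exp (-x) * (1 + x) ≤ 1 := by
    calc Real.exp (-x) * (1 + x) ≤ Real.exp (-x) * Real.exp x := by
          gcongr; linarith [Real.add_one_le_exp x]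
      _ = 1 := by rw [← Real.exp_add, neg_add_cancel, Real.exp_zero]
  nlinarith [Real.exp_pos (-x), sq_nonneg x]

lemma log_sum_mul_exp_neg_le {α : Type*} [Fintype α] {η : ℝ} (hη : 0 ≤ η) {p ℓ : α → ℝ}
    (hp : p ∈ stdSimplex ℝ α) (hℓ : ∀ a, 0 ≤ ℓ a) :
    Real.log (∑ a, p a * Real.exp (-η * ℓ a)) ≤
      η ^ 2 * ∑ a, ℓ a ^ 2 * p a - η * ∑ a, ℓ a * p a := by
  have hquad : ∑ a, p a * Real.exp (-η * ℓ a) ≤ ∑ a, p a * (1 - η * ℓ a + (η * ℓ a) ^ 2) := by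
    gcongr with a
    · exact hp.1 a
    · rw [neg_mul]; exact Real.exp_neg_le_one_sub_add_sq (mul_nonneg hη (hℓ a))
  have hexpand : ∑ a, p a * (1 - η * ℓ a + (η * ℓ a) ^ 2) =
      ∑ a, p a - η * ∑ a, ℓ a * p a + η ^ 2 * ∑ a, ℓ a ^ 2 * p a := by
    rw [mul_sum, mul_sum, ← sum_sub_distrib, ← sum_add_distrib]
    exact sum_congr rfl fun a _ => by ring
  have hpos : 0 < ∑ a, p a * Real.exp (-η * ℓ a) := by
    obtain ⟨a, -, ha⟩ := exists_lt_of_sum_lt (s := univ) (f := fun _ => 0) (g := p) (by simp [hp.2])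
    exact sum_pos' (fun b _ => mul_nonneg (hp.1 b) (Real.exp_pos _).le)
      ⟨a, mem_univ a, mul_pos ha (Real.exp_pos _)⟩
  linarith [Real.log_le_sub_one_of_pos hpos, hp.2]

section Hedge

variable {ι α : Type*} [LinearOrder ι] [Fintype α] [Nonempty α] {η : ℝ} {ℓ : ι → α → ℝ}

lemma log_sum_exp_neg_sum_le (hη : 0 ≤ η) (hℓ : ∀ n a, 0 ≤ ℓ n a) (s : Finset ι) :
    Real.log (∑ a, Real.exp (-η * ∑ j ∈ s, ℓ j a)) ≤ Real.log (Fintype.card α) +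
      ∑ n ∈ s, (η ^ 2 * ∑ a, ℓ n a ^ 2 * expWeights η (fun a => ∑ j ∈ s with j < n, ℓ j a) a
        - η * ∑ a, ℓ n a * expWeights η (fun a => ∑ j ∈ s with j < n, ℓ j a) a) := by
  induction s using Finset.induction_on_max with
  | empty => simp
  | insert m s hlt ih =>
    have hm : m ∉ s := fun h => lt_irrefl m (hlt m h)
    have hprefix_m : {j ∈ insert m s | j < m} = s := by
      rw [filter_insert, if_neg (lt_irrefl m)]
      exact filter_true_of_mem hlt
    have hprefix : ∀ n ∈ s, {j ∈ insert m s | j < n} = {j ∈ s | j < n} := fun n hn => by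
      rw [filter_insert, if_neg (hlt n hn).not_gt]
    have hstep := log_sum_mul_exp_neg_le hη
      (expWeights_mem_stdSimplex η (fun a => ∑ j ∈ s, ℓ j a)) (hℓ m)
    have hcum : ∀ a, ∑ j ∈ insert m s, ℓ j a = ∑ j ∈ s, ℓ j a + ℓ m a := fun a => by
      rw [sum_insert hm, add_comm]
    simp only [hcum, log_sum_exp_add]
    rw [sum_insert hm, hprefix_m]
    simp +contextual only [hprefix]
    linarith

lemma hedge_regret_le (hη : 0 < η) (hℓ : ∀ n a, 0 ≤ ℓ n a) (s : Finset ι) (z : α) :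
    ∑ n ∈ s, ∑ a, ℓ n a * expWeights η (fun a => ∑ j ∈ s with j < n, ℓ j a) a
        - ∑ n ∈ s, ℓ n z ≤
      Real.log (Fintype.card α) / η +
        η * ∑ n ∈ s, ∑ a, ℓ n a ^ 2 * expWeights η (fun a => ∑ j ∈ s with j < n, ℓ j a) a := by
  have hcomparator :
      -η * ∑ n ∈ s, ℓ n z ≤ Real.log (∑ a, Real.exp (-η * ∑ j ∈ s, ℓ j a)) := by
    rw [← Real.log_exp (-η * _)]
    exact Real.log_le_log (Real.exp_pos _)
      (single_le_sum (f := fun a => Real.exp (-η * ∑ j ∈ s, ℓ j a))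
        (fun _ _ => (Real.exp_pos _).le) (mem_univ z))
  have hpot := log_sum_exp_neg_sum_le hη.le hℓ s
  rw [sum_sub_distrib, ← mul_sum, ← mul_sum] at hpot
  rw [← sub_le_iff_le_add, le_div_iff₀ hη]
  linear_combination hcomparator + hpot

lemma hedge_sameLabel_regret_le {κ : Type*} [Fintype ι] [Fintype κ] [DecidableEq κ]
    (hη : 0 < η) (hℓ : ∀ n a, 0 ≤ ℓ n a) (c : ι → κ) (z : κ → α) :
    ∑ n, ∑ a, ℓ n a * sameLabelExpWeights η ℓ c n a - ∑ n, ℓ n (z (c n)) ≤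
      Fintype.card κ * Real.log (Fintype.card α) / η +
        η * ∑ n, ∑ a, ℓ n a ^ 2 * sameLabelExpWeights η ℓ c n a := by
  set x := sameLabelExpWeights η ℓ c
  have hclass : ∀ k, ∀ n ∈ ({n | c n = k} : Finset ι),
      x n = expWeights η (fun a => ∑ j ∈ {j | c j = k} with j < n, ℓ j a) := by
    intro k n hn
    rw [mem_filter] at hn
    show expWeights η (sameLabelCumLoss ℓ c n) = _
    congr 1
    ext a
    simp only [sameLabelCumLoss, filter_filter, hn.2, and_comm]
  have hfiber : ∀ k, ∑ n ∈ ({n | c n = k} : Finset ι),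
      (∑ a, ℓ n a * x n a - ℓ n (z (c n)) - η * ∑ a, ℓ n a ^ 2 * x n a) ≤
        Real.log (Fintype.card α) / η := by
    intro k
    have h := hedge_regret_le hη hℓ {n | c n = k} (z k)
    have hz : ∀ n ∈ ({n | c n = k} : Finset ι), ℓ n (z (c n)) = ℓ n (z k) := fun n hn => by
      rw [(mem_filter.mp hn).2]
    rw [sum_sub_distrib, sum_sub_distrib, ← mul_sum]
    simp +contextual only [hclass k, hz]
    linarith
  have hsum := sum_le_sum fun k (_ : k ∈ univ) => hfiber k
  rw [sum_fiberwise univ c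
    (fun n => ∑ a, ℓ n a * x n a - ℓ n (z (c n)) - η * ∑ a, ℓ n a ^ 2 * x n a)] at hsum
  rw [sum_sub_distrib, sum_sub_distrib, ← mul_sum, sum_const, card_univ, nsmul_eq_mul] at hsum
  rw [mul_div_assoc]
  linarith

end Hedge

section Measurability

variable {Ω : Type*} [MeasurableSpace Ω]

lemma Measurable.apply_of_countable {α β : Type*} [MeasurableSpace α] [MeasurableSpace β]
    [Countable α] [MeasurableSingletonClass α] {f : Ω → α → β} (hf : Measurable f) {g : Ω → α}
    (hg : Measurable g) : Measurable fun ω => f ω (g ω) :=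
  (measurable_from_prod_countable_left (f := fun p : Ω × α => f p.1 p.2)
    fun a => (measurable_pi_apply a).comp hf).comp (measurable_id.prodMk hg)

lemma Finset.measurable_sum_filter {ι M : Type*} [AddCommMonoid M] [MeasurableSpace M]
    [MeasurableAdd₂ M] (s : Finset ι) {p : ι → Ω → Prop} [∀ j ω, Decidable (p j ω)]
    (hp : ∀ j, MeasurableSet {ω | p j ω}) {f : ι → Ω → M} (hf : ∀ j, Measurable (f j)) :
    Measurable fun ω => ∑ j ∈ s with p j ω, f j ω := by
  have h : (fun ω => ∑ j ∈ s with p j ω, f j ω) =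
      fun ω => ∑ j ∈ s, if p j ω then f j ω else 0 :=
    funext fun ω => sum_filter _ _
  rw [h]
  exact Finset.measurable_sum s fun j _ => Measurable.ite (hp j) (hf j) measurable_const

lemma measurable_sameLabelCumLoss {ι κ α : Type*} [Fintype ι] [LinearOrder ι] [DecidableEq κ]
    [MeasurableSpace κ] [MeasurableEq κ] {ℓ : ι → Ω → α → ℝ} (hℓ : ∀ j, Measurable (ℓ j))
    {c : ι → Ω → κ} (hc : ∀ j, Measurable (c j)) (n : ι) :
    Measurable fun ω => sameLabelCumLoss (fun j => ℓ j ω) (fun j => c j ω) n :=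
  measurable_pi_lambda _ fun a =>
    Finset.measurable_sum_filter _ (p := fun j ω => j < n ∧ c j ω = c n ω)
      (fun j => (MeasurableSet.const _).inter (measurableSet_eq_fun (hc j) (hc n)))
      fun j => (measurable_pi_apply a).comp (hℓ j)

end Measurability

section Integrability

variable {Ω α : Type*} [MeasurableSpace Ω] {μ : Measure Ω} [Fintype α]

lemma integrable_apply_of_measurable [MeasurableSpace α] [MeasurableSingletonClass α]
    {f : Ω → α → ℝ} (hf : ∀ a, Integrable (fun ω => f ω a) μ) {g : Ω → α} (hg : Measurable g) :
    Integrable (fun ω => f ω (g ω)) μ := by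
  have hsplit : (fun ω => f ω (g ω)) = fun ω => ∑ a, {ω | g ω = a}.indicator (f · a) ω := by
    classical
    ext ω
    simp [Set.indicator_apply]
  rw [hsplit]
  exact integrable_finsetSum _ fun a _ => (hf a).indicator (hg (measurableSet_singleton a))

lemma MeasureTheory.Integrable.mul_apply_of_mem_stdSimplex {f : Ω → ℝ} (hf : Integrable f μ)
    {X : Ω → α → ℝ} (hX : Measurable X) (hXs : ∀ ω, X ω ∈ stdSimplex ℝ α) (a : α) :
    Integrable (fun ω => f ω * X ω a) μ := by
  refine hf.mul_bdd (c := 1) ((measurable_pi_apply a).comp hX).aestronglyMeasurable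
    (ae_of_all _ fun ω => ?_)
  obtain ⟨h0, h1⟩ := mem_Icc_of_mem_stdSimplex (hXs ω) a
  rwa [Real.norm_of_nonneg h0]

lemma integrable_sum_mul_of_mem_stdSimplex {f X : Ω → α → ℝ}
    (hf : ∀ a, Integrable (fun ω => f ω a) μ) (hX : Measurable X)
    (hXs : ∀ ω, X ω ∈ stdSimplex ℝ α) : Integrable (fun ω => ∑ a, f ω a * X ω a) μ :=
  integrable_finsetSum _ fun a _ => (hf a).mul_apply_of_mem_stdSimplex hX hXs a

variable [IsProbabilityMeasure μ]

lemma integral_sum_mul_le_of_indepFun {L X : Ω → α → ℝ} (hLX : IndepFun L X μ)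
    (hL : ∀ a, Integrable (fun ω => L ω a) μ) (hX : Measurable X)
    (hXs : ∀ ω, X ω ∈ stdSimplex ℝ α) {M : ℝ} (hM : ∀ a, ∫ ω, L ω a ∂μ ≤ M) :
    ∫ ω, ∑ a, L ω a * X ω a ∂μ ≤ M := by
  have hXa : ∀ a, Integrable (fun ω => X ω a) μ := fun a => by
    simpa using (integrable_const (1 : ℝ)).mul_apply_of_mem_stdSimplex hX hXs a
  have hfactor : ∀ a, ∫ ω, L ω a * X ω a ∂μ = (∫ ω, L ω a ∂μ) * ∫ ω, X ω a ∂μ := fun a =>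
    (hLX.comp (measurable_pi_apply a) (measurable_pi_apply a)).integral_fun_mul_eq_mul_integral
      (hL a).aestronglyMeasurable (hXa a).aestronglyMeasurable
  have hX1 : ∑ a, ∫ ω, X ω a ∂μ = 1 := by
    have hsum : ∀ ω, ∑ a, X ω a = 1 := fun ω => (hXs ω).2
    rw [← integral_finsetSum _ fun a _ => hXa a]
    simp [hsum]
  calc ∫ ω, ∑ a, L ω a * X ω a ∂μ = ∑ a, (∫ ω, L ω a ∂μ) * ∫ ω, X ω a ∂μ := by
        rw [integral_finsetSum _ fun a _ => (hL a).mul_apply_of_mem_stdSimplex hX hXs a]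
        exact sum_congr rfl fun a _ => hfactor a
    _ ≤ ∑ a, M * ∫ ω, X ω a ∂μ := by
        gcongr with a
        · exact integral_nonneg fun ω => (hXs ω).1 a
        · exact hM a
    _ = M := by rw [← mul_sum, hX1, mul_one]

lemma integral_le_add_mul_integral {f g : Ω → ℝ} (hf : Integrable f μ) (hg : Integrable g μ)
    {c η : ℝ} (hfg : ∀ ω, f ω ≤ c + η * g ω) : ∫ ω, f ω ∂μ ≤ c + η * ∫ ω, g ω ∂μ :=
  calc ∫ ω, f ω ∂μ ≤ ∫ ω, (c + η * g ω) ∂μ :=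
        integral_mono hf ((integrable_const c).add (hg.const_mul η)) hfg
    _ = c + η * ∫ ω, g ω ∂μ := by
        rw [integral_add (integrable_const c) (hg.const_mul η), integral_const,
          integral_const_mul]
        simp

end Integrability

section ExpectedRegret

variable {Ω ι κ α : Type*} [MeasurableSpace Ω] {μ : Measure Ω} [IsProbabilityMeasure μ]
  [Fintype ι] [LinearOrder ι] [Fintype κ] [DecidableEq κ] [MeasurableSpace κ]
  [MeasurableSingletonClass κ] [Fintype α] [Nonempty α] [MeasurableSpace α]
  [MeasurableSingletonClass α]

theorem integral_sameLabel_regret_le {η M : ℝ} (hη : 0 < η) {C : ι → Ω → κ}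
    (hC : ∀ n, Measurable (C n)) {L : ι → Ω → α → ℝ} (hLmeas : ∀ n, Measurable (L n))
    (hpos : ∀ n ω a, 0 ≤ L n ω a) (hsq : ∀ n a, Integrable (fun ω => L n ω a ^ 2) μ)
    (hindep : ∀ n, IndepFun (L n)
      (fun ω => sameLabelExpWeights η (fun j => L j ω) (fun j => C j ω) n) μ)
    (hM : ∀ n a, ∫ ω, L n ω a ^ 2 ∂μ ≤ M) {Z : Ω → κ → α} (hZ : Measurable Z) :
    ∫ ω, (∑ n, ∑ a, L n ω a * sameLabelExpWeights η (fun j => L j ω) (fun j => C j ω) n a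
        - ∑ n, L n ω (Z ω (C n ω))) ∂μ ≤
      Fintype.card κ * Real.log (Fintype.card α) / η + η * (Fintype.card ι * M) := by
  set X := fun n ω => sameLabelExpWeights η (fun j => L j ω) (fun j => C j ω) n
  have hXs : ∀ n ω, X n ω ∈ stdSimplex ℝ α := fun n ω => expWeights_mem_stdSimplex _ _
  have hXmeas : ∀ n, Measurable (X n) := fun n =>
    (continuous_expWeights η).measurable.comp (measurable_sameLabelCumLoss hLmeas hC n)
  have hL : ∀ n a, Integrable (fun ω => L n ω a) μ := fun n a =>
    ((memLp_two_iff_integrable_sq ((measurable_pi_apply a).comp (hLmeas n)).aestronglyMeasurable).2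
      (hsq n a)).integrable one_le_two
  have hint : Integrable (fun ω => ∑ n, ∑ a, L n ω a * X n ω a - ∑ n, L n ω (Z ω (C n ω))) μ :=
    (integrable_finsetSum _ fun n _ =>
      integrable_sum_mul_of_mem_stdSimplex (hL n) (hXmeas n) (hXs n)).sub
    (integrable_finsetSum _ fun n _ =>
      integrable_apply_of_measurable (hL n) (hZ.apply_of_countable (hC n)))
  have hQint : ∀ n, Integrable (fun ω => ∑ a, L n ω a ^ 2 * X n ω a) μ := fun n =>
    integrable_sum_mul_of_mem_stdSimplex (hsq n) (hXmeas n) (hXs n)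
  have hQ : ∀ n, ∫ ω, ∑ a, L n ω a ^ 2 * X n ω a ∂μ ≤ M := fun n =>
    integral_sum_mul_le_of_indepFun
      ((hindep n).comp (φ := fun (f : α → ℝ) a => f a ^ 2) (ψ := id) (by fun_prop)
        measurable_id) (hsq n) (hXmeas n) (hXs n) (hM n)
  calc _ ≤ Fintype.card κ * Real.log (Fintype.card α) / η +
        η * ∫ ω, ∑ n, ∑ a, L n ω a ^ 2 * X n ω a ∂μ :=
        integral_le_add_mul_integral hint (integrable_finsetSum _ fun n _ => hQint n) fun ω =>
          hedge_sameLabel_regret_le hη (fun n a => hpos n ω a) (fun n => C n ω) (Z ω)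
    _ ≤ Fintype.card κ * Real.log (Fintype.card α) / η + η * (Fintype.card ι * M) := by
        rw [integral_finsetSum _ fun n _ => hQint n]
        gcongr
        simpa using sum_le_sum fun n (_ : n ∈ univ) => hQ n

end ExpectedRegret

lemma div_add_mul_eq_two_sqrt_mul {A B η : ℝ} (hA : 0 < A) (hB : 0 < B) (hη : η = √(A / B)) :
    A / η + η * B = 2 * √(A * B) := by
  have hsA := Real.sq_sqrt hA.le
  have hsB := Real.sq_sqrt hB.le
  have hsA_pos := Real.sqrt_pos.mpr hA
  have hsB_pos := Real.sqrt_pos.mpr hB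
  rw [hη, Real.sqrt_div hA.le, Real.sqrt_mul hA.le]
  field_simp
  rw [hsA, hsB]
  ring

/-- Paper's Theorem 2: universal regret bound of the OMD-OME algorithm against
per-history optimal comparators, where `K` is the size of the history space and
the learning rate is `η = √(K log d / ((σ² + 1) N))`. -/
theorem stmt_11 {Ω : Type*} [MeasurableSpace Ω] (μ : Measure Ω) [IsProbabilityMeasure μ]
    (d K N : ℕ) (hd : 2 ≤ d) (hK : 1 ≤ K) (hN : 1 ≤ N) (σ η : ℝ)
    (hη : η = Real.sqrt ((K * Real.log d) / ((σ ^ 2 + 1) * N)))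
    (C : Fin N → Ω → Fin K) (hCmeas : ∀ n, Measurable (C n))
    (L : Fin N → Ω → Fin d → ℝ)
    (hLmeas : ∀ n, Measurable (L n))
    (hpos : ∀ n ω a, 0 ≤ L n ω a)
    (hsq : ∀ n a, Integrable (fun ω => (L n ω a) ^ 2) μ)
    (X : Fin N → Ω → Fin d → ℝ)
    (hX : ∀ n ω a, X n ω a =
      Real.exp (-η * ∑ j ∈ Finset.univ.filter (fun j => j < n ∧ C j ω = C n ω), L j ω a)
        / ∑ b : Fin d,
            Real.exp (-η * ∑ j ∈ Finset.univ.filter (fun j => j < n ∧ C j ω = C n ω), L j ω b))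
    (hindep : ∀ n, IndepFun (L n) (X n) μ)
    (hbound : ∀ n a, ∫ ω, (L n ω a) ^ 2 ∂μ ≤ σ ^ 2 + 1)
    (Z : Ω → Fin K → Fin d) (hZmeas : Measurable Z) :
    ∫ ω, (∑ n : Fin N, ∑ a : Fin d, L n ω a * X n ω a
        - ∑ n : Fin N, L n ω (Z ω (C n ω))) ∂μ
      ≤ 2 * Real.sqrt ((σ ^ 2 + 1) * N * K * Real.log d) := by
  have : Nonempty (Fin d) := ⟨⟨0, by omega⟩⟩
  have hA : 0 < K * Real.log d :=
    mul_pos (by exact_mod_cast hK) (Real.log_pos (by exact_mod_cast hd))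
  have hB : 0 < (σ ^ 2 + 1) * N := mul_pos (by positivity) (by exact_mod_cast hN)
  have hX' : X = fun n ω => sameLabelExpWeights η (fun j => L j ω) (fun j => C j ω) n :=
    funext fun n => funext fun ω => funext (hX n ω)
  subst hX'
  calc _ ≤ K * Real.log d / η + η * (N * (σ ^ 2 + 1)) := by
        simpa using integral_sameLabel_regret_le (hη ▸ Real.sqrt_pos.mpr (div_pos hA hB))
          hCmeas hLmeas hpos hsq hindep hbound hZmeas
    _ = 2 * Real.sqrt ((σ ^ 2 + 1) * N * K * Real.log d) := by
        rw [mul_comm (N : ℝ), div_add_mul_eq_two_sqrt_mul hA hB hη]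
        ring_nf
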